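/- Suppose (p⁰, q⁰) is a competitive equilibrium with q⁰ > 0: q⁰ maximizes ρ_{λg}(fun k => (g k − q)·π k) + q·p⁰ over q ≥ 0 and maximizes ρ_{λd}(fun k => (q − d k)·π k) − q·p⁰ over q ≥ 0. Then the equilibrium contract price lies between the extreme spot prices: min_{k} π k ≤ p⁰ ≤ max_{k} π k. -/

import Mathlib

open Finset

/-- Rockafellar–Uryasev representation of the (lower-tail) conditional value-at-risk
for `K` equally likely scenarios. -/
noncomputable def CVaR (K : ℕ) (α : ℝ) (x : Fin K → ℝ) : ℝ :=
  sSup {v : ℝ | ∃ a : ℝ, v = a + (1 / (K * (1 - α))) * ∑ k, min (x k - a) 0}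

/-- Risk-adjusted expected value: convex combination of expectation and CVaR. -/
noncomputable def riskAdj (K : ℕ) (α lam : ℝ) (x : Fin K → ℝ) : ℝ :=
  lam * ((1 / K) * ∑ k, x k) + (1 - lam) * CVaR K α x

/-!
`riskAdj` is monotone and cash-additive: `riskAdj (x + c) = riskAdj x + c`. Compared with the
equilibrium quantity `q₀ > 0`, selling nothing raises the generator's spot payoff by
`q₀ • π ≥ q₀ * min π` while forgoing the contract income `q₀ * p₀`, so optimality of `q₀` forces
`min π ≤ p₀`; selling one unit more lowers the spot payoff by `π ≤ max π` while earning `p₀`, so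
`p₀ ≤ max π`.
-/

noncomputable def cvarObjective (K : ℕ) (α : ℝ) (x : Fin K → ℝ) (a : ℝ) : ℝ :=
  a + (1 / (K * (1 - α))) * ∑ k, min (x k - a) 0

section CVaR

variable {K : ℕ} {α : ℝ}

theorem cvar_eq_iSup (x : Fin K → ℝ) : CVaR K α x = ⨆ a, cvarObjective K α x a := by
  rw [CVaR, iSup]
  congr 1
  ext v
  exact exists_congr fun a => eq_comm

theorem cvarObjective_mono (hα : α ≤ 1) {x y : Fin K → ℝ} (hxy : x ≤ y) (a : ℝ) :
    cvarObjective K α x a ≤ cvarObjective K α y a := by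
  have hcoef : 0 ≤ 1 / ((K : ℝ) * (1 - α)) := by
    have h1α : 0 ≤ 1 - α := by linarith
    positivity
  unfold cvarObjective
  gcongr with k
  exact hxy k

theorem cvarObjective_le_mean (hK : 0 < K) (hα0 : 0 ≤ α) (hα1 : α < 1) (x : Fin K → ℝ)
    (a : ℝ) : cvarObjective K α x a ≤ (1 / K) * ∑ k, x k := by
  have hKpos : (0 : ℝ) < K := by exact_mod_cast hK
  have hsum_nonpos : ∑ k, min (x k - a) 0 ≤ 0 := sum_nonpos fun k _ => min_le_right _ _
  have hcoef : 1 / (K : ℝ) ≤ 1 / (K * (1 - α)) :=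
    one_div_le_one_div_of_le (by nlinarith) (by nlinarith)
  have htermwise : ∑ k, (a + min (x k - a) 0) ≤ ∑ k, x k :=
    sum_le_sum fun k _ => by linarith [min_le_left (x k - a) 0]
  rw [sum_add_distrib, sum_const, card_univ, Fintype.card_fin, nsmul_eq_mul] at htermwise
  calc cvarObjective K α x a
      ≤ a + (1 / K) * ∑ k, min (x k - a) 0 := by
        unfold cvarObjective
        linarith [mul_le_mul_of_nonpos_right hcoef hsum_nonpos]
    _ = (1 / K) * (K * a + ∑ k, min (x k - a) 0) := by field_simp
    _ ≤ (1 / K) * ∑ k, x k := by gcongr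

theorem bddAbove_range_cvarObjective (hK : 0 < K) (hα0 : 0 ≤ α) (hα1 : α < 1)
    (x : Fin K → ℝ) : BddAbove (Set.range (cvarObjective K α x)) :=
  ⟨_, Set.forall_mem_range.2 (cvarObjective_le_mean hK hα0 hα1 x)⟩

theorem cvar_monotone (hK : 0 < K) (hα0 : 0 ≤ α) (hα1 : α < 1) : Monotone (CVaR K α) := by
  intro x y hxy
  rw [cvar_eq_iSup, cvar_eq_iSup]
  exact ciSup_mono (bddAbove_range_cvarObjective hK hα0 hα1 y)
    (cvarObjective_mono hα1.le hxy)

theorem cvarObjective_add_const (x : Fin K → ℝ) (c a : ℝ) :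
    cvarObjective K α (fun k => x k + c) a = cvarObjective K α x (a - c) + c := by
  simp only [cvarObjective, sub_sub_eq_add_sub]
  ring

theorem cvar_add_const (hK : 0 < K) (hα0 : 0 ≤ α) (hα1 : α < 1) (x : Fin K → ℝ) (c : ℝ) :
    CVaR K α (fun k => x k + c) = CVaR K α x + c := by
  simp only [cvar_eq_iSup, cvarObjective_add_const]
  rw [ciSup_add (bddAbove_range_cvarObjective hK hα0 hα1 x)]
  exact (Equiv.subRight c).iSup_comp (g := fun a => cvarObjective K α x a + c)

end CVaR

section RiskAdj

variable {K : ℕ} {α lam : ℝ}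

theorem riskAdj_monotone (hK : 0 < K) (hα0 : 0 ≤ α) (hα1 : α < 1) (hlam0 : 0 ≤ lam)
    (hlam1 : lam ≤ 1) : Monotone (riskAdj K α lam) := by
  intro x y hxy
  have hmean : (1 / (K : ℝ)) * ∑ k, x k ≤ (1 / K) * ∑ k, y k := by
    gcongr with k
    exact hxy k
  have hcvar := cvar_monotone hK hα0 hα1 hxy
  unfold riskAdj
  have hcvar_weight : 0 ≤ 1 - lam := by linarith
  gcongr

theorem riskAdj_add_const (hK : 0 < K) (hα0 : 0 ≤ α) (hα1 : α < 1) (x : Fin K → ℝ) (c : ℝ) :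
    riskAdj K α lam (fun k => x k + c) = riskAdj K α lam x + c := by
  have hKne : (K : ℝ) ≠ 0 := by positivity
  simp only [riskAdj, cvar_add_const hK hα0 hα1, sum_add_distrib, sum_const, card_univ,
    Fintype.card_fin, nsmul_eq_mul]
  field_simp
  ring

theorem riskAdj_add_const_le (hK : 0 < K) (hα0 : 0 ≤ α) (hα1 : α < 1) (hlam0 : 0 ≤ lam)
    (hlam1 : lam ≤ 1) {x y : Fin K → ℝ} {c : ℝ} (h : ∀ k, x k + c ≤ y k) :
    riskAdj K α lam x + c ≤ riskAdj K α lam y :=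
  riskAdj_add_const (lam := lam) hK hα0 hα1 x c ▸ riskAdj_monotone hK hα0 hα1 hlam0 hlam1 h

end RiskAdj

theorem equilibrium_price_between_extreme_spot_prices_general (K : ℕ) (hK : 0 < K)
    (α : ℝ) (hα0 : 0 ≤ α) (hα1 : α < 1)
    (lamg : ℝ) (hlamg : 0 ≤ lamg ∧ lamg ≤ 1)
    (g π : Fin K → ℝ) (p₀ q₀ : ℝ) (hq₀ : 0 < q₀)
    (hgen : ∀ q : ℝ, 0 ≤ q →
      riskAdj K α lamg (fun k => (g k - q) * π k) + q * p₀ ≤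
        riskAdj K α lamg (fun k => (g k - q₀) * π k) + q₀ * p₀) :
    Finset.univ.inf' (Finset.univ_nonempty_iff.mpr (Fin.pos_iff_nonempty.mp hK)) π ≤ p₀ ∧
    p₀ ≤ Finset.univ.sup' (Finset.univ_nonempty_iff.mpr (Fin.pos_iff_nonempty.mp hK)) π := by
  set m := Finset.univ.inf' (Finset.univ_nonempty_iff.mpr (Fin.pos_iff_nonempty.mp hK)) π
  set M := Finset.univ.sup' (Finset.univ_nonempty_iff.mpr (Fin.pos_iff_nonempty.mp hK)) π
  set x : Fin K → ℝ := fun k => (g k - q₀) * π k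
  have hle : ∀ (c : ℝ) (y : Fin K → ℝ), (∀ k, x k + c ≤ y k) →
      riskAdj K α lamg x + c ≤ riskAdj K α lamg y := fun _ _ =>
    riskAdj_add_const_le hK hα0 hα1 hlamg.1 hlamg.2
  constructor
  · have hstop := hgen 0 le_rfl
    have hgain := hle (q₀ * m) (fun k => (g k - 0) * π k) fun k => by
      have hmk : m ≤ π k := inf'_le π (mem_univ k)
      simp only [x]
      nlinarith
    have hscaled : q₀ * m ≤ q₀ * p₀ := by linarith
    exact le_of_mul_le_mul_left hscaled hq₀
  · have hmore := hgen (q₀ + 1) (by linarith)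
    have hloss := hle (-M) (fun k => (g k - (q₀ + 1)) * π k) fun k => by
      have hMk : π k ≤ M := le_sup' π (mem_univ k)
      simp only [x]
      linarith
    linarith

/-- At a competitive equilibrium with strictly positive traded quantity, the equilibrium
contract price lies between the smallest and the largest spot price scenarios. -/
theorem equilibrium_price_between_extreme_spot_prices (K : ℕ) (hK : 0 < K)
    (α : ℝ) (hα0 : 0 ≤ α) (hα1 : α < 1)
    (lamg lamd : ℝ) (hlamg : 0 ≤ lamg ∧ lamg ≤ 1) (hlamd : 0 ≤ lamd ∧ lamd ≤ 1)
    (g d π : Fin K → ℝ) (p₀ q₀ : ℝ) (hq₀ : 0 < q₀)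
    (hgen : ∀ q : ℝ, 0 ≤ q →
      riskAdj K α lamg (fun k => (g k - q) * π k) + q * p₀ ≤
        riskAdj K α lamg (fun k => (g k - q₀) * π k) + q₀ * p₀)
    (hload : ∀ q : ℝ, 0 ≤ q →
      riskAdj K α lamd (fun k => (q - d k) * π k) - q * p₀ ≤
        riskAdj K α lamd (fun k => (q₀ - d k) * π k) - q₀ * p₀) :
    Finset.univ.inf' (Finset.univ_nonempty_iff.mpr (Fin.pos_iff_nonempty.mp hK)) π ≤ p₀ ∧
    p₀ ≤ Finset.univ.sup' (Finset.univ_nonempty_iff.mpr (Fin.pos_iff_nonempty.mp hK)) π :=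
  equilibrium_price_between_extreme_spot_prices_general K hK α hα0 hα1 lamg hlamg g π p₀ q₀ hq₀ hgen
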